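/- Let N be the natural numbers with their usual order, ∞ a new point, and β_N the topology on N ∪ {∞} with subbase all ↑n and ↑n ∪ {∞}; and let γ_N be the topology with subbase all ↑n ∪ {∞} (n ∈ N). Then the singleton {∞} is not open in β_N, but {∞} is open in the topology determined by the convergence class D′ on (N ∪ {∞}, β_N), where D′ consists of pairs (D, x) with D directed (in the specialization order) and either x ∈ ↓D, or D → x with every element of D below x. -/

import Mathlib

/-- The subbase for the topology `β_N` on `ℕ ∪ {∞}` (modelled as `Option ℕ`, with
`∞ = none`): all sets `↑n` and `↑n ∪ {∞}` for `n ∈ ℕ`. -/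
def betaSub : Set (Set (Option ℕ)) :=
  {s | ∃ n : ℕ, s = some '' Set.Ici n ∨ s = insert none (some '' Set.Ici n)}

/-- The topology `β_N` on `ℕ ∪ {∞}`. -/
def betaN : TopologicalSpace (Option ℕ) := TopologicalSpace.generateFrom betaSub

/-- The specialization order of `(ℕ ∪ {∞}, β_N)`. -/
def sLe (a b : Option ℕ) : Prop := a ∈ @closure (Option ℕ) betaN {b}

/-- Convergence of a directed subset (as a monotone net) in `(ℕ ∪ {∞}, β_N)`. -/
def convBeta (D : Set (Option ℕ)) (x : Option ℕ) : Prop :=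
  ∀ U : Set (Option ℕ), betaN.IsOpen U → x ∈ U → ∃ d ∈ D, ∀ e ∈ D, sLe d e → e ∈ U

lemma range_some_open : betaN.IsOpen (Set.range (some : ℕ → Option ℕ)) := by
  have h : Set.range (some : ℕ → Option ℕ) = some '' Set.Ici 0 := by
    ext x; simp [Set.mem_image]
  rw [h]
  exact TopologicalSpace.GenerateOpen.basic _ ⟨0, Or.inl rfl⟩

lemma high_open (n : ℕ) : betaN.IsOpen (insert none (some '' Set.Ici n)) :=
  TopologicalSpace.GenerateOpen.basic _ ⟨n, Or.inr rfl⟩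

lemma sLe_none_right {d : Option ℕ} (h : sLe d none) : d = none := by
  cases d with
  | none => rfl
  | some m =>
    exfalso
    letI := betaN
    have := (mem_closure_iff.mp h) (Set.range some) range_some_open ⟨m, rfl⟩
    rcases this with ⟨y, hy1, hy2⟩
    simp only [Set.mem_singleton_iff] at hy2
    subst hy2
    rcases hy1 with ⟨k, hk⟩
    exact Option.some_ne_none _ hk

lemma sLe_none_left {e : Option ℕ} (h : sLe none e) : e = none := by
  cases e with
  | none => rfl
  | some n =>
    exfalso
    letI := betaN
    have := (mem_closure_iff.mp h) (insert none (some '' Set.Ici (n+1)))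
      (high_open (n+1)) (Set.mem_insert _ _)
    rcases this with ⟨y, hy1, hy2⟩
    simp only [Set.mem_singleton_iff] at hy2
    subst hy2
    rcases hy1 with h1 | ⟨k, hk, hk2⟩
    · exact Option.some_ne_none _ h1
    · have h1 : k = n := Option.some_injective _ hk2
      have h2 : n + 1 ≤ k := hk
      omega

lemma open_none_mem {U : Set (Option ℕ)} (h : betaN.IsOpen U) (hU : none ∈ U) :
    ∃ k, ∀ m, k ≤ m → some m ∈ U := by
  induction h with
  | basic s hs =>
    rcases hs with ⟨n, rfl | rfl⟩
    · exact absurd hU (by simp)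
    · exact ⟨n, fun m hm => Or.inr ⟨m, hm, rfl⟩⟩
  | univ => exact ⟨0, fun m _ => trivial⟩
  | inter s t _ _ ihs iht =>
    rcases ihs hU.1 with ⟨k1, hk1⟩
    rcases iht hU.2 with ⟨k2, hk2⟩
    exact ⟨max k1 k2, fun m hm => ⟨hk1 m (le_trans (le_max_left _ _) hm),
      hk2 m (le_trans (le_max_right _ _) hm)⟩⟩
  | sUnion S _ ih =>
    rcases hU with ⟨s, hs, hsx⟩
    rcases ih s hs hsx with ⟨k, hk⟩
    exact ⟨k, fun m hm => ⟨s, hs, hk m hm⟩⟩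

/-- `{∞}` is not open in `β_N`, but `{∞}` is open in the topology determined by the
convergence class `D′` on `(ℕ ∪ {∞}, β_N)`, where `D′` consists of the pairs `(D, x)`
with `D` directed (w.r.t. the specialization order) and either `x ∈ ↓D`, or `D → x`
with every element of `D` below `x`. -/
theorem stmt18 (T : TopologicalSpace (Option ℕ))
    (hT : ∀ U : Set (Option ℕ), T.IsOpen U ↔
      ∀ (D : Set (Option ℕ)) (x : Option ℕ), D.Nonempty → DirectedOn sLe D →
        ((∃ d ∈ D, sLe x d) ∨ (convBeta D x ∧ ∀ d ∈ D, sLe d x)) →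
        x ∈ U → ∃ d ∈ D, ∀ e ∈ D, sLe d e → e ∈ U) :
    ¬ betaN.IsOpen {none} ∧ T.IsOpen {none} := by
  constructor
  · intro h
    rcases open_none_mem h rfl with ⟨k, hk⟩
    exact Option.some_ne_none _ (hk k le_rfl)
  · rw [hT]
    intro D x hD _ hcond hx
    have hx' : x = none := hx
    subst hx'
    rcases hcond with ⟨d, hd, hsd⟩ | ⟨_, hall⟩
    · have : d = none := sLe_none_left hsd
      subst this
      exact ⟨none, hd, fun e _ he => sLe_none_left he⟩
    · rcases hD with ⟨d, hd⟩
      have hdn : d = none := sLe_none_right (hall d hd)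
      subst hdn
      exact ⟨none, hd, fun e _ he => sLe_none_left he⟩
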